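/- Let β be a mixed base and define ord_β(n) = max{L : β̂_L divides n} for n ≠ 0 (and ord_β(0) = ∞). For m heap sizes, the set C_β of nonzero tuples C = (c^0,...,c^{m-1}) ∈ ℕ^m with ord_β(Σ_i c^i) = min_i ord_β(c^i) satisfies: for every C ∈ C_β and every X ∈ ℕ^m with X - C ∈ ℕ^m (componentwise), σ_β(X - C) ≠ σ_β(X), where σ_β(X) = x^0 ⊕ ... ⊕ x^{m-1} is the digit-wise Nim sum in base β. -/

import Mathlib

open scoped BigOperators

/-- β̂_L = β_0 ⋯ β_{L-1}, the place value of digit L in mixed base β. -/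
def bhat (β : ℕ → ℕ) (L : ℕ) : ℕ := ∏ i ∈ Finset.range L, β i

/-- The L-th digit of n in the mixed base β. -/
def mdigit (β : ℕ → ℕ) (n L : ℕ) : ℕ := n / bhat β L % β L

/-- Digit-wise addition modulo β_L in mixed base β. -/
def moplus (β : ℕ → ℕ) (n h : ℕ) : ℕ :=
  ∑ L ∈ Finset.range (n + h + 1), ((mdigit β n L + mdigit β h L) % β L) * bhat β L

/-- Digit-wise subtraction modulo β_L in mixed base β. -/
def mominus (β : ℕ → ℕ) (n h : ℕ) : ℕ :=
  ∑ L ∈ Finset.range (n + h + 1), ((β L + mdigit β n L - mdigit β h L) % β L) * bhat β L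

/-- σ_β(X) = x^0 ⊕ ⋯ ⊕ x^{m-1}: the digit-wise Nim sum in mixed base β. -/
def msigma (β : ℕ → ℕ) {m : ℕ} (X : Fin m → ℕ) : ℕ :=
  ∑ L ∈ Finset.range (∑ i, X i + 1), ((∑ i, mdigit β (X i) L) % β L) * bhat β L

/-- Hamming weight: number of nonzero components. -/
def hamwt {m : ℕ} (C : Fin m → ℕ) : ℕ := (Finset.univ.filter (fun i => C i ≠ 0)).card

/-- ord_β(n): the largest L with β̂_L ∣ n (⊤ for n = 0). -/
def mord (β : ℕ → ℕ) (n : ℕ) : ℕ∞ :=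
  if n = 0 then ⊤ else (Nat.findGreatest (fun L => bhat β L ∣ n) n : ℕ∞)

/-- 𝒞 is a Sprague-Grundy system of σ_β: its members are nonzero moves and
σ_β satisfies the mex recursion of the take-away game Γ(ℕ^m, 𝒞), i.e. σ_β is the
Sprague-Grundy function of that game. -/
def IsSGSystem (β : ℕ → ℕ) {m : ℕ} (𝒞 : Set (Fin m → ℕ)) : Prop :=
  (∀ C ∈ 𝒞, C ≠ 0) ∧
  ∀ X : Fin m → ℕ, msigma β X =
    sInf {n : ℕ | ∀ C ∈ 𝒞, (∀ i, C i ≤ X i) → msigma β (fun i => X i - C i) ≠ n}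

/-
Let K = ord_β(∑ c^i). Since K is at most every ord_β(c^i), each c^i is a multiple of β̂_K, so
x^i ↦ x^i - c^i lowers ⌊x^i / β̂_K⌋ by exactly c^i / β̂_K. The K-th digit of σ_β(X) is
(∑ ⌊x^i / β̂_K⌋) mod β_K, so a move that keeps σ_β would make β_K divide (∑ c^i) / β̂_K,
i.e. β̂_{K+1} ∣ ∑ c^i, contradicting the maximality of K.
-/

section MixedBase

variable {β : ℕ → ℕ}

lemma bhat_succ (β : ℕ → ℕ) (K : ℕ) : bhat β (K + 1) = bhat β K * β K :=
  Finset.prod_range_succ _ _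

lemma bhat_dvd_bhat (β : ℕ → ℕ) {K L : ℕ} (h : K ≤ L) : bhat β K ∣ bhat β L :=
  Finset.prod_dvd_prod_of_subset _ _ _ (Finset.range_subset_range.mpr h)

lemma bhat_pos (hβ : ∀ L, 0 < β L) (K : ℕ) : 0 < bhat β K :=
  Finset.prod_pos fun L _ => hβ L

lemma self_lt_bhat (hβ : ∀ L, 2 ≤ β L) (K : ℕ) : K < bhat β K := by
  induction K with
  | zero => simp [bhat]
  | succ K ih =>
    rw [bhat_succ]
    have := Nat.mul_le_mul_left (bhat β K) (hβ K)
    omega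

lemma sum_range_mul_bhat_lt {s : ℕ → ℕ} (hs : ∀ L, s L < β L) (M : ℕ) :
    ∑ L ∈ Finset.range M, s L * bhat β L < bhat β M := by
  induction M with
  | zero => simp [bhat]
  | succ M ih =>
    rw [Finset.sum_range_succ, bhat_succ]
    calc ∑ L ∈ Finset.range M, s L * bhat β L + s M * bhat β M
        < (s M + 1) * bhat β M := by rw [add_one_mul]; omega
      _ ≤ bhat β M * β M := by rw [mul_comm]; exact Nat.mul_le_mul_left _ (hs M)

lemma mdigit_eq_zero_of_lt {n K : ℕ} (h : n < bhat β K) : mdigit β n K = 0 := by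
  rw [mdigit, Nat.div_eq_of_lt h, Nat.zero_mod]

lemma mdigit_add_bhat_mul {a K : ℕ} (ha : a < bhat β K) (q : ℕ) :
    mdigit β (a + bhat β K * q) K = q % β K := by
  rw [mdigit, Nat.add_mul_div_left _ _ (Nat.zero_lt_of_lt ha), Nat.div_eq_of_lt ha, zero_add]

lemma mdigit_sum_range_mul_bhat {s : ℕ → ℕ} (hs : ∀ L, s L < β L) (M K : ℕ) :
    mdigit β (∑ L ∈ Finset.range M, s L * bhat β L) K = if K < M then s K else 0 := by
  split_ifs with hKM
  · obtain ⟨t, ht⟩ : bhat β (K + 1) ∣ ∑ L ∈ Finset.Ico (K + 1) M, s L * bhat β L :=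
      Finset.dvd_sum fun L hL => (bhat_dvd_bhat β (Finset.mem_Ico.mp hL).1).mul_left _
    have hsplit : ∑ L ∈ Finset.range M, s L * bhat β L
        = ∑ L ∈ Finset.range K, s L * bhat β L + bhat β K * (s K + β K * t) := by
      rw [← Finset.sum_range_add_sum_Ico _ hKM, Finset.sum_range_succ, ht, bhat_succ]
      ring
    rw [hsplit, mdigit_add_bhat_mul (sum_range_mul_bhat_lt hs K), Nat.add_mul_mod_self_left,
      Nat.mod_eq_of_lt (hs K)]
  · have hβ : ∀ L, 0 < β L := fun L => (Nat.zero_le _).trans_lt (hs L)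
    exact mdigit_eq_zero_of_lt ((sum_range_mul_bhat_lt hs M).trans_le
      (Nat.le_of_dvd (bhat_pos hβ K) (bhat_dvd_bhat β (not_lt.mp hKM))))

lemma mdigit_msigma (hβ : ∀ L, 2 ≤ β L) {m : ℕ} (X : Fin m → ℕ) (K : ℕ) :
    mdigit β (msigma β X) K = (∑ i, X i / bhat β K) % β K := by
  have hs : ∀ L, (∑ i, mdigit β (X i) L) % β L < β L := fun L =>
    Nat.mod_lt _ (zero_lt_two.trans_le (hβ L))
  rw [msigma, mdigit_sum_range_mul_bhat hs]
  split_ifs with hK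
  · exact (Finset.sum_nat_mod _ _ _).symm
  · have hX : ∀ i, X i / bhat β K = 0 := fun i => Nat.div_eq_of_lt <|
      calc X i ≤ ∑ j, X j := Finset.single_le_sum (fun j _ => Nat.zero_le _) (Finset.mem_univ i)
        _ < K := by omega
        _ < bhat β K := self_lt_bhat hβ K
    simp [hX]

lemma mord_ne_top {n : ℕ} (hn : n ≠ 0) : mord β n ≠ ⊤ := by
  simp [mord, hn]

lemma coe_le_mord_iff (hβ : ∀ L, 2 ≤ β L) {n K : ℕ} : (K : ℕ∞) ≤ mord β n ↔ bhat β K ∣ n := by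
  rcases eq_or_ne n 0 with rfl | hn
  · simp [mord]
  rw [mord, if_neg hn, Nat.cast_le]
  constructor
  · intro hK
    exact (bhat_dvd_bhat β hK).trans
      (Nat.findGreatest_spec (P := fun L => bhat β L ∣ n) (Nat.zero_le _) (by simp [bhat]))
  · intro hdvd
    have := (self_lt_bhat hβ K).trans_le (Nat.le_of_dvd (Nat.pos_of_ne_zero hn) hdvd)
    exact Nat.le_findGreatest this.le hdvd

lemma mdigit_msigma_sub_ne (hβ : ∀ L, 2 ≤ β L) {m K : ℕ} {C X : Fin m → ℕ}
    (hle : ∀ i, C i ≤ X i) (hdvd : ∀ i, bhat β K ∣ C i) (hndvd : ¬ bhat β (K + 1) ∣ ∑ i, C i) :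
    mdigit β (msigma β fun i => X i - C i) K ≠ mdigit β (msigma β X) K := by
  rw [mdigit_msigma hβ, mdigit_msigma hβ]
  intro h
  have hsplit : ∑ i, (X i - C i) / bhat β K + (∑ i, C i) / bhat β K
      = ∑ i, X i / bhat β K := by
    rw [Nat.sum_div fun i _ => hdvd i, ← Finset.sum_add_distrib]
    exact Finset.sum_congr rfl fun i _ => by
      rw [← Nat.add_div_of_dvd_left (hdvd i), Nat.sub_add_cancel (hle i)]
  have hdvd_quot : β K ∣ (∑ i, C i) / bhat β K := by
    rw [← Nat.modEq_zero_iff_dvd]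
    refine Nat.ModEq.add_left_cancel' (∑ i, (X i - C i) / bhat β K) ?_
    rw [hsplit, add_zero]
    exact h.symm
  exact hndvd (bhat_succ β K ▸ Nat.mul_dvd_of_dvd_div (Finset.dvd_sum fun i _ => hdvd i) hdvd_quot)

end MixedBase

/-- Moves in 𝒞_β change the Nim sum σ_β. -/
theorem stmt2 (β : ℕ → ℕ) (hβ : ∀ L, 2 ≤ β L) {m : ℕ} (C X : Fin m → ℕ)
    (hC0 : C ≠ 0) (hord : mord β (∑ i, C i) = ⨅ i, mord β (C i))
    (hle : ∀ i, C i ≤ X i) :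
    msigma β (fun i => X i - C i) ≠ msigma β X := by
  have hS : ∑ i, C i ≠ 0 := fun h =>
    hC0 (funext fun i => Finset.sum_eq_zero_iff.mp h i (Finset.mem_univ i))
  obtain ⟨K, hK⟩ := ENat.ne_top_iff_exists.mp (mord_ne_top (β := β) hS)
  refine fun h => mdigit_msigma_sub_ne hβ hle (fun i => ?_) ?_ (congrArg (mdigit β · K) h)
  · rw [← coe_le_mord_iff hβ, hK, hord]
    exact iInf_le _ i
  · rw [← coe_le_mord_iff hβ, ← hK, Nat.cast_le]
    omega
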